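/- There is no 2-dimensional subspace M ⊆ ℂ^{2^n} that separates controlled phase errors with error at most 1/10: that is, for any 2-dimensional subspace M there exist diagonal unitaries X, Y with diagonal entries in {1, e^{iπ/4}, e^{iπ/2}} and orthonormal vectors φ, ψ ∈ M such that |⟨Xφ, Yψ⟩| > 1/10. -/

import Mathlib

/-!
Take an orthonormal pair `e₁, e₂` in `M` and put `a = conj e₁ * e₂`. If `∑ |a x| ≥ 1/3` keep the
pair; otherwise `∑ | |e₁ x|² - |e₂ x|² | ≥ 2/3` (since `∑ |e₁ x|² = 1`), and the rotated pair
`(e₁ ± e₂)/√2` has `conj φ * ψ` with real part `(|e₁|² - |e₂|²)/2` pointwise. Either way some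
orthonormal pair has `∑ |conj φ x * ψ x| ≥ 1/3`, so `∑ |Re|` or `∑ |Im|` is at least `1/6`;
replacing `ψ` by `i ψ` we may assume it is `∑ |Im|`. Finally, applying the phase `π/2` to `φ` where
`Im (conj φ x * ψ x) ≥ 0` and to `ψ` elsewhere turns every term of `⟨Xφ, Yψ⟩` into one with real
part `|Im (conj φ x * ψ x)|`.
-/

open scoped BigOperators

/-- Strings in `{0,1}^n`. -/
abbrev Bn (n : ℕ) := Fin n → Bool

/-- Hermitian inner product on `{0,1}^n → ℂ`. -/
noncomputable def ip {n : ℕ} (h g : Bn n → ℂ) : ℂ :=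
  ∑ x : Bn n, (starRingEnd ℂ) (h x) * g x

/-- A phase assignment coming from `Phaseflip`: apply a fixed phase
`θ ∈ {0, π/4, π/2}` on a set `S` and no phase elsewhere. -/
def IsPhaseflip {n : ℕ} (θf : Bn n → ℝ) : Prop :=
  ∃ (S : Finset (Bn n)) (θ : ℝ),
    (θ = 0 ∨ θ = Real.pi / 4 ∨ θ = Real.pi / 2) ∧
    ∀ x, θf x = if x ∈ S then θ else 0

open Complex ComplexConjugate

section Orthonormal

variable {n : ℕ}

lemma ip_eq_inner (f g : Bn n → ℂ) : ip f g = inner ℂ (WithLp.toLp 2 f) (WithLp.toLp 2 g) := by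
  simp [ip, PiLp.inner_apply, mul_comm]

def IsOrthonormalPair (φ ψ : Bn n → ℂ) : Prop :=
  ip φ φ = 1 ∧ ip ψ ψ = 1 ∧ ip φ ψ = 0

lemma exists_isOrthonormalPair_mem (M : Submodule ℂ (Bn n → ℂ)) (hM : 2 ≤ Module.finrank ℂ M) :
    ∃ φ ∈ M, ∃ ψ ∈ M, IsOrthonormalPair φ ψ := by
  set e := (WithLp.linearEquiv 2 ℂ (Bn n → ℂ)).symm
  set M' := M.map e.toLinearMap
  have hM' : 2 ≤ Module.finrank ℂ M' := by rwa [LinearEquiv.finrank_map_eq]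
  set b := stdOrthonormalBasis ℂ M'
  have hb := b.orthonormal
  have mem : ∀ i, (b i : EuclideanSpace ℂ (Bn n)).ofLp ∈ M := fun i => by
    obtain ⟨f, hf, hfi⟩ := Submodule.mem_map.mp (b i).2
    rwa [← hfi]
  set i₀ : Fin (Module.finrank ℂ M') := ⟨0, by omega⟩
  set i₁ : Fin (Module.finrank ℂ M') := ⟨1, by omega⟩
  refine ⟨_, mem i₀, _, mem i₁, ?_, ?_, ?_⟩ <;>
    simp only [ip_eq_inner, WithLp.toLp_ofLp, ← Submodule.coe_inner]
  · exact (orthonormal_iff_ite.mp hb i₀ i₀).trans (if_pos rfl)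
  · exact (orthonormal_iff_ite.mp hb i₁ i₁).trans (if_pos rfl)
  · exact (orthonormal_iff_ite.mp hb i₀ i₁).trans (if_neg (by simp [i₀, i₁]))

namespace IsOrthonormalPair

variable {φ ψ : Bn n → ℂ}

lemma smul_right (h : IsOrthonormalPair φ ψ) {c : ℂ} (hc : ‖c‖ = 1) :
    IsOrthonormalPair φ (c • ψ) := by
  obtain ⟨hφ, hψ, hφψ⟩ := h
  refine ⟨hφ, ?_, ?_⟩ <;>
    simp only [ip_eq_inner, WithLp.toLp_smul, inner_smul_left, inner_smul_right] at *
  · rw [hψ, mul_one, RCLike.mul_conj, hc]; simp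
  · rw [hφψ, mul_zero]

lemma hadamard (h : IsOrthonormalPair φ ψ) :
    IsOrthonormalPair ((√2 : ℂ)⁻¹ • (φ + ψ)) ((√2 : ℂ)⁻¹ • (φ - ψ)) := by
  obtain ⟨hφ, hψ, hφψ⟩ := h
  have hψφ : ip ψ φ = 0 := by
    rw [ip_eq_inner, ← inner_conj_symm, ← ip_eq_inner, hφψ, map_zero]
  have two : ((√2 : ℂ)⁻¹ * (√2 : ℂ)⁻¹) = 2⁻¹ := by
    rw [← mul_inv, ← ofReal_mul, Real.mul_self_sqrt zero_le_two, ofReal_ofNat]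
  rw [ip_eq_inner] at hφ hψ hφψ hψφ
  simp only [IsOrthonormalPair, ip_eq_inner, WithLp.toLp_smul, WithLp.toLp_add, WithLp.toLp_sub,
    inner_smul_left, inner_smul_right, inner_add_left, inner_add_right, inner_sub_left,
    inner_sub_right, hφ, hψ, hφψ, hψφ, map_inv₀, conj_ofReal]
  norm_num
  linear_combination 2 * two

end IsOrthonormalPair

end Orthonormal

section Phases

variable {n : ℕ}

lemma isPhaseflip_ite_mem (S : Finset (Bn n)) :
    IsPhaseflip (fun x => if x ∈ S then Real.pi / 2 else 0) :=
  ⟨S, Real.pi / 2, Or.inr (Or.inr rfl), fun _ => rfl⟩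

lemma conj_exp_mul_mul_exp_mul (θ θ' : ℝ) (z w : ℂ) :
    conj (exp (θ * I) * z) * (exp (θ' * I) * w) = exp ((θ' - θ) * I) * (conj z * w) := by
  have hconj : conj (exp (θ * I)) = exp (-θ * I) := by
    rw [← exp_conj, map_mul, conj_ofReal, conj_I, neg_mul, mul_neg]
  rw [map_mul, hconj, sub_eq_neg_add, add_mul, exp_add]
  ring

lemma exists_isPhaseflip_sum_abs_im_le (φ ψ : Bn n → ℂ) :
    ∃ θX θY : Bn n → ℝ, IsPhaseflip θX ∧ IsPhaseflip θY ∧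
      ∑ x, |(conj (φ x) * ψ x).im| ≤
        ‖∑ x, conj (exp (θX x * I) * φ x) * (exp (θY x * I) * ψ x)‖ := by
  classical
  set S := Finset.univ.filter fun x => 0 ≤ (conj (φ x) * ψ x).im
  set θX : Bn n → ℝ := fun x => if x ∈ S then Real.pi / 2 else 0
  set θY : Bn n → ℝ := fun x => if x ∈ Sᶜ then Real.pi / 2 else 0
  refine ⟨θX, θY, isPhaseflip_ite_mem S, isPhaseflip_ite_mem Sᶜ, ?_⟩
  have hterm : ∀ x, |(conj (φ x) * ψ x).im| =
      (conj (exp (θX x * I) * φ x) * (exp (θY x * I) * ψ x)).re := by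
    intro x
    rw [conj_exp_mul_mul_exp_mul]
    by_cases hx : x ∈ S
    · have hexp : exp ((θY x - θX x) * I) = -I := by
        simp only [θX, θY, if_pos hx, if_neg (Finset.notMem_compl.mpr hx), ofReal_zero, zero_sub,
          neg_mul, exp_neg, ofReal_div, ofReal_ofNat, exp_pi_div_two_mul_I, inv_I]
      rw [hexp, abs_of_nonneg (Finset.mem_filter.mp hx).2]
      simp [mul_re]
    · have hexp : exp ((θY x - θX x) * I) = I := by
        simp only [θX, θY, if_neg hx, if_pos (Finset.mem_compl.mpr hx), ofReal_zero, sub_zero,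
          ofReal_div, ofReal_ofNat, exp_pi_div_two_mul_I]
      have him : (conj (φ x) * ψ x).im < 0 := by simpa [S] using hx
      rw [hexp, abs_of_neg him]
      simp [mul_re]
  calc ∑ x, |(conj (φ x) * ψ x).im|
      = (∑ x, conj (exp (θX x * I) * φ x) * (exp (θY x * I) * ψ x)).re := by
        rw [re_sum]
        exact Finset.sum_congr rfl fun x _ => hterm x
    _ ≤ _ := re_le_norm _

end Phases

section Overlap

variable {n : ℕ}

noncomputable def overlap (φ ψ : Bn n → ℂ) : ℝ :=
  ∑ x, ‖conj (φ x) * ψ x‖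

lemma sq_le_mul_add_abs_sq_sub {a b : ℝ} (ha : 0 ≤ a) (hb : 0 ≤ b) :
    a ^ 2 ≤ a * b + |a ^ 2 - b ^ 2| := by
  rcases le_total a b with hab | hab
  · nlinarith [abs_nonneg (a ^ 2 - b ^ 2)]
  · rw [abs_of_nonneg (by nlinarith)]
    nlinarith

lemma sum_norm_sq_eq_one {f : Bn n → ℂ} (hf : ip f f = 1) : ∑ x, ‖f x‖ ^ 2 = 1 := by
  have : ((∑ x, ‖f x‖ ^ 2 : ℝ) : ℂ) = ip f f := by
    push_cast
    exact Finset.sum_congr rfl fun x _ => (conj_mul' (f x)).symm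
  exact_mod_cast this.trans hf

lemma one_le_overlap_add_sum_abs_sub {φ : Bn n → ℂ} (hφ : ip φ φ = 1) (ψ : Bn n → ℂ) :
    1 ≤ overlap φ ψ + ∑ x, |‖φ x‖ ^ 2 - ‖ψ x‖ ^ 2| := by
  rw [← sum_norm_sq_eq_one hφ, overlap, ← Finset.sum_add_distrib]
  refine Finset.sum_le_sum fun x _ => ?_
  rw [norm_mul, RCLike.norm_conj]
  exact sq_le_mul_add_abs_sq_sub (norm_nonneg _) (norm_nonneg _)

lemma abs_sq_norm_sub_sq_norm_le (z w : ℂ) : |‖z‖ ^ 2 - ‖w‖ ^ 2| ≤ ‖conj (z + w) * (z - w)‖ := by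
  have hre : (conj (z + w) * (z - w)).re = ‖z‖ ^ 2 - ‖w‖ ^ 2 := by
    simp only [mul_re, conj_re, conj_im, add_re, add_im, sub_re, sub_im, Complex.sq_norm,
      normSq_apply]
    ring
  exact hre ▸ abs_re_le_norm _

lemma sum_abs_sub_le_overlap_hadamard (φ ψ : Bn n → ℂ) :
    (∑ x, |‖φ x‖ ^ 2 - ‖ψ x‖ ^ 2|) / 2 ≤
      overlap ((√2 : ℂ)⁻¹ • (φ + ψ)) ((√2 : ℂ)⁻¹ • (φ - ψ)) := by
  have hnorm : ‖(√2 : ℂ)⁻¹‖ ^ 2 = 2⁻¹ := by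
    rw [norm_inv, inv_pow, norm_real, Real.norm_of_nonneg (Real.sqrt_nonneg 2),
      Real.sq_sqrt zero_le_two]
  rw [Finset.sum_div, overlap]
  refine Finset.sum_le_sum fun x _ => ?_
  have hx : ‖conj (((√2 : ℂ)⁻¹ • (φ + ψ)) x) * ((√2 : ℂ)⁻¹ • (φ - ψ)) x‖ =
      ‖conj (φ x + ψ x) * (φ x - ψ x)‖ / 2 := by
    simp only [Pi.smul_apply, Pi.add_apply, Pi.sub_apply, smul_eq_mul, map_mul, norm_mul,
      RCLike.norm_conj]
    rw [div_eq_mul_inv, ← hnorm]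
    ring
  rw [hx]
  exact div_le_div_of_nonneg_right (abs_sq_norm_sub_sq_norm_le _ _) zero_le_two

lemma exists_isOrthonormalPair_mem_one_third_le_overlap (M : Submodule ℂ (Bn n → ℂ))
    (hM : 2 ≤ Module.finrank ℂ M) :
    ∃ φ ∈ M, ∃ ψ ∈ M, IsOrthonormalPair φ ψ ∧ 1 / 3 ≤ overlap φ ψ := by
  obtain ⟨e₁, he₁, e₂, he₂, he⟩ := exists_isOrthonormalPair_mem M hM
  by_cases h : 1 / 3 ≤ overlap e₁ e₂
  · exact ⟨e₁, he₁, e₂, he₂, he, h⟩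
  · refine ⟨_, M.smul_mem _ (M.add_mem he₁ he₂), _, M.smul_mem _ (M.sub_mem he₁ he₂),
      he.hadamard, ?_⟩
    linarith [one_le_overlap_add_sum_abs_sub he.1 e₂, sum_abs_sub_le_overlap_hadamard e₁ e₂]

lemma exists_isOrthonormalPair_mem_one_sixth_le_sum_abs_im (M : Submodule ℂ (Bn n → ℂ))
    (hM : 2 ≤ Module.finrank ℂ M) :
    ∃ φ ∈ M, ∃ ψ ∈ M, IsOrthonormalPair φ ψ ∧ 1 / 6 ≤ ∑ x, |(conj (φ x) * ψ x).im| := by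
  obtain ⟨φ, hφ, ψ, hψ, h, hov⟩ := exists_isOrthonormalPair_mem_one_third_le_overlap M hM
  have hsplit : overlap φ ψ ≤ ∑ x, |(conj (φ x) * ψ x).re| + ∑ x, |(conj (φ x) * ψ x).im| := by
    rw [overlap, ← Finset.sum_add_distrib]
    exact Finset.sum_le_sum fun x _ => norm_le_abs_re_add_abs_im _
  by_cases him : 1 / 6 ≤ ∑ x, |(conj (φ x) * ψ x).im|
  · exact ⟨φ, hφ, ψ, hψ, h, him⟩
  · refine ⟨φ, hφ, I • ψ, M.smul_mem I hψ, h.smul_right norm_I, ?_⟩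
    have hrot : ∀ x, (conj (φ x) * (I • ψ) x).im = (conj (φ x) * ψ x).re := fun x => by
      simp [mul_im]
    simp only [hrot]
    linarith

end Overlap

/-- no 2-dimensional subspace `M ⊆ ℂ^{2^n}` separates `Phaseflip`
with error at most `1/10`: there are `X, Y ∈ Phaseflip` and orthonormal
`φ, ψ ∈ M` with `|⟨Xφ, Yψ⟩| > 1/10`. -/
theorem stmt15 {n : ℕ} (M : Submodule ℂ (Bn n → ℂ))
    (hM : Module.finrank ℂ M = 2) :
    ∃ θX θY : Bn n → ℝ, IsPhaseflip θX ∧ IsPhaseflip θY ∧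
      ∃ φ ∈ M, ∃ ψ ∈ M, ip φ φ = 1 ∧ ip ψ ψ = 1 ∧ ip φ ψ = 0 ∧
        (1 / 10 : ℝ) <
          ‖(∑ x : Bn n,
            (starRingEnd ℂ) (Complex.exp (θX x * Complex.I) * φ x) *
              (Complex.exp (θY x * Complex.I) * ψ x))‖ := by
  obtain ⟨φ, hφ, ψ, hψ, ⟨hφφ, hψψ, hφψ⟩, him⟩ :=
    exists_isOrthonormalPair_mem_one_sixth_le_sum_abs_im M hM.ge
  obtain ⟨θX, θY, hX, hY, hle⟩ := exists_isPhaseflip_sum_abs_im_le φ ψ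
  exact ⟨θX, θY, hX, hY, φ, hφ, ψ, hψ, hφφ, hψψ, hφψ, by linarith⟩
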